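/- Let p and q be distinct primes. The algebraic connectivity (second-smallest Laplacian eigenvalue) of the power graph of D_{2pq} is 1, and the largest Laplacian eigenvalue is 2pq with multiplicity 1. -/

import Mathlib

open Polynomial

/-- The power graph of a group: distinct `x, y` are adjacent iff one is an
integral power of the other. -/
def powerGraph (G : Type*) [Group G] : SimpleGraph G where
  Adj x y := x ≠ y ∧ (x ∈ Subgroup.zpowers y ∨ y ∈ Subgroup.zpowers x)
  symm := ⟨fun _ _ h => ⟨h.1.symm, h.2.symm⟩⟩
  loopless := ⟨fun _ h => h.1 rfl⟩

/-!
In the power graph of `D_{2n}` the identity is adjacent to every vertex, and each reflection is a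
pendant vertex hanging from the identity. For any graph `G` on `N` vertices, `L_G + L_{Gᶜ}` is the
Laplacian `N • 1 - J` of the complete graph, so all eigenvalues are at most `N`, and an
`N`-eigenvector is constant along the edges of `Gᶜ`. Here every non-identity vertex other than a
reflection `s` is a `Gᶜ`-neighbour of `s`, so the `N`-eigenspace is the line through `N • e₁ - 𝟙`;
as algebraic and geometric multiplicities agree for symmetric matrices, `N = 2pq` is a simple
root. The edges at the dominating identity contribute `∑ₓ (v 1 - v x)² ≥ ‖v‖²` to `vᵀ L v` when
`v ⟂ 𝟙`, so nonzero eigenvalues are at least `1`, and two reflections with the same single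
neighbour give the eigenvector `e_{sr 0} - e_{sr 1}` for the eigenvalue `1`.
-/

open Matrix Finset Module

namespace Matrix

variable {n : Type*} [Fintype n] [DecidableEq n]

theorem mem_roots_charpoly_iff {K : Type*} [Field K] {A : Matrix n n K} {μ : K} :
    μ ∈ A.charpoly.roots ↔ ∃ v ≠ 0, A *ᵥ v = μ • v := by
  rw [mem_roots A.charpoly_monic.ne_zero, ← charpoly_toLin',
    ← Module.End.hasEigenvalue_iff_isRoot_charpoly, Module.End.hasEigenvalue_iff,
    Submodule.ne_bot_iff]
  simp only [Module.End.mem_eigenspace_iff, toLin'_apply]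
  grind

theorem IsHermitian.count_roots_charpoly {𝕜 : Type*} [RCLike 𝕜] {A : Matrix n n 𝕜}
    (hA : A.IsHermitian) (μ : 𝕜) :
    A.charpoly.roots.count μ = finrank 𝕜 (Module.End.eigenspace (toEuclideanLin A) μ) := by
  rw [count_roots, ← (isSymmetric_toEuclideanLin_iff.mpr hA).isFinitelySemisimple
    |>.maxGenEigenspace_eq_eigenspace, LinearMap.finrank_maxGenEigenspace_eq, toEuclideanLin,
    toLpLin_eq_toLin, charpoly_toLin]

end Matrix

theorem sum_sub_sq {V R : Type*} [Fintype V] [CommRing R] (a : R) (v : V → R) :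
    ∑ x, (a - v x) ^ 2 = Fintype.card V * a ^ 2 - 2 * a * ∑ x, v x + v ⬝ᵥ v := by
  simp only [sub_sq, sum_add_distrib, sum_sub_distrib, sum_const, card_univ, nsmul_eq_mul,
    ← mul_sum, dotProduct, ← sq]

theorem sum_sum_sub_sq {V R : Type*} [Fintype V] [CommRing R] (v : V → R) :
    ∑ x, ∑ y, (v x - v y) ^ 2 = 2 * (Fintype.card V * (v ⬝ᵥ v) - (∑ x, v x) ^ 2) := by
  simp only [sum_sub_sq, sum_add_distrib, sum_sub_distrib, sum_const, card_univ, nsmul_eq_mul,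
    ← mul_sum, ← sum_mul]
  simp only [dotProduct, sq]
  ring

namespace SimpleGraph

variable {V : Type*} [Fintype V] [DecidableEq V] (G : SimpleGraph V) [DecidableRel G.Adj]

theorem dotProduct_lapMatrix_mulVec_add_compl {R : Type*} [Field R] [CharZero R] (v : V → R) :
    v ⬝ᵥ (G.lapMatrix R *ᵥ v) + v ⬝ᵥ (Gᶜ.lapMatrix R *ᵥ v) =
      Fintype.card V * (v ⬝ᵥ v) - (∑ x, v x) ^ 2 := by
  have hsplit : ∀ x y, ((if G.Adj x y then (v x - v y) ^ 2 else 0) +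
      if Gᶜ.Adj x y then (v x - v y) ^ 2 else 0) = (v x - v y) ^ 2 := by
    intro x y
    by_cases hxy : x = y
    · simp [hxy]
    · by_cases h : G.Adj x y <;> simp [h, hxy]
  simp only [← toLinearMap₂'_apply', lapMatrix_toLinearMap₂', ← add_div, ← sum_add_distrib,
    hsplit, sum_sum_sub_sq]
  ring

theorem dotProduct_lapMatrix_mulVec_le (v : V → ℝ) :
    v ⬝ᵥ (G.lapMatrix ℝ *ᵥ v) ≤ Fintype.card V * (v ⬝ᵥ v) - (∑ x, v x) ^ 2 := by
  have := (posSemidef_lapMatrix ℝ Gᶜ).dotProduct_mulVec_nonneg v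
  rw [star_trivial] at this
  linarith [G.dotProduct_lapMatrix_mulVec_add_compl v]

theorem sum_neighborFinset_sub_sq_le (u : V) (v : V → ℝ) :
    ∑ x ∈ G.neighborFinset u, (v u - v x) ^ 2 ≤ v ⬝ᵥ (G.lapMatrix ℝ *ᵥ v) := by
  set f : V → V → ℝ := fun x y => if G.Adj x y then (v x - v y) ^ 2 else 0
  have hf : ∀ x y, 0 ≤ f x y := fun x y => by positivity
  have hsymm : ∀ x, f x u = f u x := fun x => by
    simp only [f, G.adj_comm x u]
    ring_nf
  have hrow : ∑ x ∈ G.neighborFinset u, (v u - v x) ^ 2 = ∑ x, f u x := by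
    rw [neighborFinset_eq_filter, sum_filter]
  have hcol : ∑ x ∈ univ.erase u, f x u = ∑ x, f u x := by
    rw [sum_erase _ (by simp [f]), sum_congr rfl fun x _ => hsymm x]
  have hrest : ∑ x ∈ univ.erase u, f x u ≤ ∑ x ∈ univ.erase u, ∑ y, f x y :=
    sum_le_sum fun x _ => single_le_sum (fun y _ => hf x y) (mem_univ u)
  have hsplit := add_sum_erase univ (fun x => ∑ y, f x y) (mem_univ u)
  -- `vᵀ L v` is half the double sum of `f`, whose row `u` and column `u` each give the left side.
  rw [← toLinearMap₂'_apply', lapMatrix_toLinearMap₂', hrow]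
  linarith

theorem sum_eq_zero_of_lapMatrix_mulVec_eq_smul {v : V → ℝ} {μ : ℝ}
    (hv : G.lapMatrix ℝ *ᵥ v = μ • v) (hμ : μ ≠ 0) : ∑ x, v x = 0 := by
  have : μ * ∑ x, v x = 0 :=
    calc μ * ∑ x, v x = (fun _ => 1) ⬝ᵥ (μ • v) := by simp [dotProduct, mul_sum]
      _ = (G.lapMatrix ℝ *ᵥ fun _ => 1) ⬝ᵥ v := by
        rw [← hv, dotProduct_mulVec, ← mulVec_transpose, (G.isSymm_lapMatrix ℝ).eq]
      _ = 0 := by rw [lapMatrix_mulVec_const_eq_zero, zero_dotProduct]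
  exact (mul_eq_zero.1 this).resolve_left hμ

theorem lapMatrix_mulVec_single_sub_single {x y : V}
    (h : G.neighborFinset x = G.neighborFinset y) :
    G.lapMatrix ℝ *ᵥ (Pi.single x 1 - Pi.single y 1) =
      (G.degree x : ℝ) • (Pi.single x 1 - Pi.single y 1) := by
  have hdeg : G.degree x = G.degree y := by rw [← card_neighborFinset_eq_degree, h,
    card_neighborFinset_eq_degree]
  have hadj : ∀ z, G.Adj z x ↔ G.Adj z y := fun z => by
    rw [G.adj_comm z x, G.adj_comm z y, ← mem_neighborFinset, h, mem_neighborFinset]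
  have hxy : ¬G.Adj x y := fun hxy => G.irrefl ((hadj x).2 hxy)
  ext z
  by_cases hzx : z = x <;> by_cases hzy : z = y <;>
    simp [lapMatrix_mulVec_apply, Pi.single_apply, sum_sub_distrib, hzx, hzy, hadj, hdeg, hxy]

theorem lapMatrix_mulVec_single_of_forall_adj {u : V} (hu : ∀ x ≠ u, G.Adj u x) :
    G.lapMatrix ℝ *ᵥ Pi.single u 1 = (Fintype.card V : ℝ) • Pi.single u 1 - fun _ => 1 := by
  have hdeg : G.degree u + 1 = Fintype.card V := by
    rw [← card_neighborFinset_eq_degree, show G.neighborFinset u = univ.erase u by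
      ext x; simpa using ⟨fun h => (G.ne_of_adj h).symm, hu x⟩, card_erase_add_one (mem_univ u),
      card_univ]
  ext z
  by_cases hz : z = u
  · subst hz
    simp [lapMatrix_mulVec_apply, ← hdeg]
  · simp [lapMatrix_mulVec_apply, Pi.single_apply, hz, (hu z hz).symm]

theorem le_card_of_mem_roots_charpoly_lapMatrix {μ : ℝ}
    (hμ : μ ∈ (G.lapMatrix ℝ).charpoly.roots) : μ ≤ Fintype.card V := by
  obtain ⟨v, hv0, hv⟩ := mem_roots_charpoly_iff.1 hμ
  have hpos : 0 < v ⬝ᵥ v := by simpa using dotProduct_star_self_pos_iff.2 hv0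
  have := G.dotProduct_lapMatrix_mulVec_le v
  rw [hv, dotProduct_smul, smul_eq_mul] at this
  nlinarith [sq_nonneg (∑ x, v x)]

theorem one_le_of_mem_roots_charpoly_lapMatrix {u : V} (hu : ∀ x ≠ u, G.Adj u x) {μ : ℝ}
    (hμ : μ ∈ (G.lapMatrix ℝ).charpoly.roots) (hμ0 : μ ≠ 0) : 1 ≤ μ := by
  obtain ⟨v, hv0, hv⟩ := mem_roots_charpoly_iff.1 hμ
  have hpos : 0 < v ⬝ᵥ v := by simpa using dotProduct_star_self_pos_iff.2 hv0
  have hsum := G.sum_eq_zero_of_lapMatrix_mulVec_eq_smul hv hμ0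
  have hstar : ∑ x ∈ G.neighborFinset u, (v u - v x) ^ 2 = ∑ x, (v u - v x) ^ 2 :=
    sum_subset (subset_univ _) fun x _ hx => by
      rw [not_not.1 fun hxu => hx ((G.mem_neighborFinset u x).2 (hu x hxu)), sub_self, sq,
        zero_mul]
  have := G.sum_neighborFinset_sub_sq_le u v
  rw [hstar, sum_sub_sq, hsum, hv, dotProduct_smul, smul_eq_mul] at this
  nlinarith [sq_nonneg (v u), (Nat.cast_nonneg (Fintype.card V) : (0 : ℝ) ≤ _)]

theorem degree_mem_roots_charpoly_lapMatrix {x y : V} (hxy : x ≠ y)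
    (h : G.neighborFinset x = G.neighborFinset y) :
    (G.degree x : ℝ) ∈ (G.lapMatrix ℝ).charpoly.roots :=
  mem_roots_charpoly_iff.2 ⟨_, fun h0 => by simpa [hxy] using congrFun h0 x,
    G.lapMatrix_mulVec_single_sub_single h⟩

theorem eq_of_compl_adj_of_lapMatrix_mulVec_eq_card_smul {v : V → ℝ}
    (hv : G.lapMatrix ℝ *ᵥ v = (Fintype.card V : ℝ) • v) {x y : V} (hxy : Gᶜ.Adj x y) :
    v x = v y := by
  have : Nonempty V := ⟨x⟩
  have hsum :=
    G.sum_eq_zero_of_lapMatrix_mulVec_eq_smul hv (Nat.cast_ne_zero.2 Fintype.card_ne_zero)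
  have hcompl : toLinearMap₂' ℝ (Gᶜ.lapMatrix ℝ) v v = 0 := by
    have := G.dotProduct_lapMatrix_mulVec_add_compl v
    rw [hv, hsum, dotProduct_smul, smul_eq_mul] at this
    rw [toLinearMap₂'_apply']
    linarith
  exact (lapMatrix_toLinearMap₂'_apply'_eq_zero_iff_forall_adj ℝ Gᶜ v).1 hcompl x y hxy

theorem eq_smul_of_lapMatrix_mulVec_eq_card_smul {u s : V} (hu : ∀ x ≠ u, G.Adj u x)
    (hsu : s ≠ u) (hs : G.neighborFinset s = {u}) {v : V → ℝ}
    (hv : G.lapMatrix ℝ *ᵥ v = (Fintype.card V : ℝ) • v) :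
    v = (-v s) • ((Fintype.card V : ℝ) • Pi.single u 1 - fun _ => 1) := by
  have : Nonempty V := ⟨u⟩
  have hconst : ∀ x ≠ u, v x = v s := fun x hxu => by
    by_cases hxs : x = s
    · rw [hxs]
    refine G.eq_of_compl_adj_of_lapMatrix_mulVec_eq_card_smul hv ((compl_adj G x s).2 ⟨hxs, ?_⟩)
    intro hadj
    simpa [hs, hxu] using (G.mem_neighborFinset s x).2 hadj.symm
  have hsum :=
    G.sum_eq_zero_of_lapMatrix_mulVec_eq_smul hv (Nat.cast_ne_zero.2 Fintype.card_ne_zero)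
  rw [← add_sum_erase _ _ (mem_univ u), sum_congr rfl fun x hx => hconst x (ne_of_mem_erase hx),
    sum_const, card_erase_of_mem (mem_univ u), card_univ, nsmul_eq_mul,
    Nat.cast_sub Fintype.card_pos, Nat.cast_one] at hsum
  ext x
  by_cases hx : x = u
  · subst hx
    simp only [Pi.smul_apply, Pi.sub_apply, Pi.single_eq_same, smul_eq_mul, mul_one, neg_mul]
    linarith
  · simp [hx, hconst x hx]

theorem count_card_roots_charpoly_lapMatrix {u s : V} (hu : ∀ x ≠ u, G.Adj u x)
    (hsu : s ≠ u) (hs : G.neighborFinset s = {u}) :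
    (G.lapMatrix ℝ).charpoly.roots.count (Fintype.card V : ℝ) = 1 := by
  set w : V → ℝ := (Fintype.card V : ℝ) • Pi.single u 1 - fun _ => 1
  have hw : G.lapMatrix ℝ *ᵥ w = (Fintype.card V : ℝ) • w := by
    rw [mulVec_sub, mulVec_smul, G.lapMatrix_mulVec_single_of_forall_adj hu,
      lapMatrix_mulVec_const_eq_zero, sub_zero]
  have hw0 : w ≠ 0 := fun h => by simpa [w, Pi.single_apply, hsu] using congrFun h s
  refine le_antisymm ?_ (Multiset.one_le_count_iff_mem.2 (mem_roots_charpoly_iff.2 ⟨w, hw0, hw⟩))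
  rw [(G.isHermitian_lapMatrix ℝ).count_roots_charpoly]
  refine finrank_le_one ⟨WithLp.toLp 2 w, ?_⟩ fun ⟨x, hx⟩ => ⟨-x s, ?_⟩
  · rw [Module.End.mem_eigenspace_iff, toLpLin_apply]
    exact congrArg (WithLp.toLp 2) hw
  · have hxv : G.lapMatrix ℝ *ᵥ WithLp.ofLp x = (Fintype.card V : ℝ) • WithLp.ofLp x :=
      congrArg WithLp.ofLp ((Module.End.mem_eigenspace_iff).1 hx)
    refine Subtype.ext (WithLp.ofLp_injective 2 ?_)
    exact (G.eq_smul_of_lapMatrix_mulVec_eq_card_smul hu hsu hs hxv).symm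

end SimpleGraph

theorem powerGraph_adj_one {G : Type*} [Group G] {x : G} (hx : x ≠ 1) :
    (powerGraph G).Adj 1 x :=
  ⟨hx.symm, Or.inl (Subgroup.one_mem _)⟩

namespace DihedralGroup

variable {n : ℕ}

theorem sr_ne_one (i : ZMod n) : sr i ≠ 1 := nofun

theorem mem_zpowers_sr_iff {i : ZMod n} {x : DihedralGroup n} :
    x ∈ Subgroup.zpowers (sr i) ↔ x = 1 ∨ x = sr i := by
  constructor
  · rintro ⟨k, rfl⟩
    dsimp only
    rw [← zpow_mod_orderOf, orderOf_sr]
    rcases Int.emod_two_eq_zero_or_one k with h | h <;> simp [h]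
  · rintro (rfl | rfl)
    exacts [Subgroup.one_mem _, Subgroup.mem_zpowers _]

theorem sr_notMem_zpowers_r (i j : ZMod n) : sr i ∉ Subgroup.zpowers (r j) := by
  rintro ⟨k, hk⟩
  simp [r_zpow] at hk

theorem powerGraph_adj_sr_iff {i : ZMod n} {x : DihedralGroup n} :
    (powerGraph (DihedralGroup n)).Adj (sr i) x ↔ x = 1 := by
  refine ⟨?_, fun hx => hx ▸ (powerGraph_adj_one (sr_ne_one i)).symm⟩
  rintro ⟨hne, h | h⟩
  · rcases x with j | j
    · exact absurd h (sr_notMem_zpowers_r i j)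
    · rcases mem_zpowers_sr_iff.1 h with h | h
      · exact absurd h (sr_ne_one i)
      · exact absurd h hne
  · exact (mem_zpowers_sr_iff.1 h).resolve_right (Ne.symm hne)

theorem neighborFinset_powerGraph_sr [NeZero n]
    [DecidableRel (powerGraph (DihedralGroup n)).Adj] (i : ZMod n) :
    (powerGraph (DihedralGroup n)).neighborFinset (sr i) = {1} := by
  ext x
  simp [powerGraph_adj_sr_iff]

end DihedralGroup

open DihedralGroup SimpleGraph

open scoped Classical in
theorem algebraic_connectivity_dihedral_general (p q : ℕ) (hp : p.Prime) [NeZero (p * q)] :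
    (1 : ℝ) ∈ ((powerGraph (DihedralGroup (p * q))).lapMatrix ℝ).charpoly.roots ∧
    (∀ μ ∈ ((powerGraph (DihedralGroup (p * q))).lapMatrix ℝ).charpoly.roots,
      μ ≠ 0 → (1 : ℝ) ≤ μ) ∧
    (∀ μ ∈ ((powerGraph (DihedralGroup (p * q))).lapMatrix ℝ).charpoly.roots,
      μ ≤ 2 * (p : ℝ) * q) ∧
    ((powerGraph (DihedralGroup (p * q))).lapMatrix ℝ).charpoly.roots.count
        (2 * (p : ℝ) * q) = 1 := by
  set Γ := powerGraph (DihedralGroup (p * q))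
  have hone : ∀ x ≠ 1, Γ.Adj 1 x := fun _ => powerGraph_adj_one
  have hcard : (Fintype.card (DihedralGroup (p * q)) : ℝ) = 2 * p * q := by
    rw [DihedralGroup.card]
    push_cast
    ring
  have : Nontrivial (ZMod (p * q)) :=
    ZMod.nontrivial_iff.2 fun h => hp.ne_one (Nat.eq_one_of_mul_eq_one_right h)
  have hdeg : Γ.degree (sr 0) = 1 := by
    rw [← card_neighborFinset_eq_degree, neighborFinset_powerGraph_sr, card_singleton]
  refine ⟨?_, fun μ hμ => Γ.one_le_of_mem_roots_charpoly_lapMatrix hone hμ,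
    fun μ hμ => hcard ▸ Γ.le_card_of_mem_roots_charpoly_lapMatrix hμ, ?_⟩
  · simpa [hdeg] using Γ.degree_mem_roots_charpoly_lapMatrix (x := sr 0) (y := sr 1) (by simp)
      (by rw [neighborFinset_powerGraph_sr, neighborFinset_powerGraph_sr])
  · rw [← hcard]
    exact Γ.count_card_roots_charpoly_lapMatrix hone (sr_ne_one 0)
      (neighborFinset_powerGraph_sr 0)

open scoped Classical in
/-- The algebraic connectivity of the power graph of `D_{2pq}` is `1`, and the largest
Laplacian eigenvalue is `2pq`, which is a simple eigenvalue. -/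
theorem algebraic_connectivity_dihedral (p q : ℕ) (hp : p.Prime) (hq : q.Prime)
    (hpq : p ≠ q) [NeZero (p * q)] :
    (1 : ℝ) ∈ ((powerGraph (DihedralGroup (p * q))).lapMatrix ℝ).charpoly.roots ∧
    (∀ μ ∈ ((powerGraph (DihedralGroup (p * q))).lapMatrix ℝ).charpoly.roots,
      μ ≠ 0 → (1 : ℝ) ≤ μ) ∧
    (∀ μ ∈ ((powerGraph (DihedralGroup (p * q))).lapMatrix ℝ).charpoly.roots,
      μ ≤ 2 * (p : ℝ) * q) ∧
    ((powerGraph (DihedralGroup (p * q))).lapMatrix ℝ).charpoly.roots.count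
        (2 * (p : ℝ) * q) = 1 :=
  algebraic_connectivity_dihedral_general p q hp
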